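/- The area of the intersection of two discs, one of radius r centered at a point P and one of radius r_TN centered at the origin, where P is at distance x_0 from the origin with |r_TN − x_0| < r < r_TN + x_0, equals r²(θ − sin(2θ)/2) + r_TN²(φ − sin(2φ)/2), where θ = arccos((r² + x_0² − r_TN²)/(2 x_0 r)) and φ = arccos((−r² + x_0² + r_TN²)/(2 x_0 r_TN)). -/

import Mathlib

/-!
Map `P` to `(x0, 0)` by a reflection fixing the origin. The line through the two intersection
points of the circles (their radical axis) cuts the lens into a segment of each disc. A segment of a disc of radius `R` cut off by
the line `x = R cos θ` has area `∫_{R cos θ}^R 2√(R² - x²) dx`, which the substitution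
`x = R cos t` turns into `R² (θ - sin (2θ) / 2)`. By the law of cosines, `r cos θ` and
`rTN cos φ` are the distances from the two centres to the radical axis.
-/

open MeasureTheory Real Set Metric intervalIntegral

theorem integral_two_mul_sqrt_sq_sub_sq {R θ : ℝ} (hR : 0 ≤ R) (hθ₀ : 0 ≤ θ) (hθπ : θ ≤ π) :
    ∫ x in R * cos θ..R, 2 * √(R ^ 2 - x ^ 2) = R ^ 2 * (θ - sin (2 * θ) / 2) := by
  have hsubst := integral_comp_mul_deriv (a := θ) (b := 0) (f := fun t => R * cos t)
    (f' := fun t => -(R * sin t)) (g := fun x => 2 * √(R ^ 2 - x ^ 2))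
    (fun t _ => by simpa using (hasDerivAt_cos t).const_mul R) (by fun_prop) (by fun_prop)
  simp only [cos_zero, mul_one] at hsubst
  rw [← hsubst, integral_congr (g := fun t => -(2 * R ^ 2) * sin t ^ 2), integral_symm,
    intervalIntegral.integral_const_mul, integral_sin_sq, sin_two_mul]
  · simp only [sin_zero, cos_zero, mul_one, zero_sub, sub_zero, neg_mul, neg_neg]; ring
  · intro t ht
    rw [uIcc_of_ge hθ₀] at ht
    have hsin : 0 ≤ sin t := sin_nonneg_of_nonneg_of_le_pi ht.1 (ht.2.trans hθπ)
    have hsq : R ^ 2 - (R * cos t) ^ 2 = (R * sin t) ^ 2 := by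
      linear_combination -R ^ 2 * sin_sq_add_cos_sq t
    simp only [Function.comp_apply, hsq, sqrt_sq (mul_nonneg hR hsin)]
    ring

theorem prod_volume_graph_eq_zero {α : Type*} [MeasurableSpace α] (μ : Measure α) [SFinite μ]
    {f : α → ℝ} (hf : Measurable f) : μ.prod volume {p : α × ℝ | p.2 = f p.1} = 0 := by
  refine (Measure.measure_prod_null (measurableSet_graph hf)).2 (ae_of_all _ fun x => ?_)
  simp [preimage]

theorem prod_volume_regionBetween_Icc {α : Type*} [MeasurableSpace α] (μ : Measure α) [SFinite μ]
    {f g : α → ℝ} (hf : Measurable f) (hg : Measurable g) (s : Set α) :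
    μ.prod volume {p : α × ℝ | p.1 ∈ s ∧ p.2 ∈ Icc (f p.1) (g p.1)}
      = μ.prod volume (regionBetween f g s) := by
  have hgraphs :=
    measure_union_null (prod_volume_graph_eq_zero μ hf) (prod_volume_graph_eq_zero μ hg)
  refine le_antisymm ?_ (measure_mono fun p ⟨hs, hp⟩ => ⟨hs, hp.1.le, hp.2.le⟩)
  rw [← measure_sdiff_null hgraphs]
  refine measure_mono fun p ⟨⟨hs, hp⟩, hne⟩ => ⟨hs, ?_, ?_⟩
  · exact lt_of_le_of_ne hp.1 fun h => hne (Or.inl h.symm)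
  · exact lt_of_le_of_ne hp.2 fun h => hne (Or.inr h)

theorem volume_setOf_fst_eq (a : ℝ) : volume {p : ℝ × ℝ | p.1 = a} = 0 := by
  rw [show {p : ℝ × ℝ | p.1 = a} = {a} ×ˢ univ by ext; simp, Measure.volume_eq_prod,
    Measure.prod_prod]
  simp

theorem volume_circularSegment {R θ : ℝ} (hR : 0 ≤ R) (hθ₀ : 0 ≤ θ) (hθπ : θ ≤ π) :
    volume {p : ℝ × ℝ | p.1 ^ 2 + p.2 ^ 2 ≤ R ^ 2 ∧ R * cos θ ≤ p.1}
      = ENNReal.ofReal (R ^ 2 * (θ - sin (2 * θ) / 2)) := by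
  set f : ℝ → ℝ := fun x => √(R ^ 2 - x ^ 2)
  have hf : Continuous f := by fun_prop
  have hset : {p : ℝ × ℝ | p.1 ^ 2 + p.2 ^ 2 ≤ R ^ 2 ∧ R * cos θ ≤ p.1}
      = {p : ℝ × ℝ | p.1 ∈ Icc (R * cos θ) R ∧ p.2 ∈ Icc ((-f) p.1) (f p.1)} := by
    ext ⟨x, y⟩
    simp only [mem_ofPred_eq, mem_Icc, Pi.neg_apply, ← abs_le, f]
    constructor
    · rintro ⟨hdisc, hx⟩
      exact ⟨⟨hx, by nlinarith⟩, abs_le_sqrt (by linarith)⟩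
    · rintro ⟨⟨hx, hxR⟩, hy⟩
      have hxR' : -R ≤ x := by nlinarith [neg_one_le_cos θ]
      have hxsq : x ^ 2 ≤ R ^ 2 := by nlinarith
      rw [le_sqrt (abs_nonneg y) (by linarith), sq_abs] at hy
      exact ⟨by linarith, hx⟩
  have hint : IntegrableOn f (Icc (R * cos θ) R) := hf.integrableOn_Icc
  rw [hset, Measure.volume_eq_prod, prod_volume_regionBetween_Icc _ hf.neg.measurable hf.measurable,
    volume_regionBetween_eq_integral hint.neg hint measurableSet_Icc
      fun x _ => neg_le_self (sqrt_nonneg _), integral_Icc_eq_integral_Ioc,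
    ← intervalIntegral.integral_of_le (by nlinarith [cos_le_one θ]),
    ← integral_two_mul_sqrt_sq_sub_sq hR hθ₀ hθπ]
  simp only [Pi.sub_apply, Pi.neg_apply, sub_neg_eq_add, ← two_mul, f]

theorem sq_mul_sub_sin_two_mul_div_two_nonneg (R : ℝ) {θ : ℝ} (hθ : 0 ≤ θ) :
    0 ≤ R ^ 2 * (θ - sin (2 * θ) / 2) :=
  mul_nonneg (sq_nonneg R) (by linarith [sin_le (by linarith : (0 : ℝ) ≤ 2 * θ)])

theorem disc_inter_disc_eq_union {x₀ a r R : ℝ} (hx₀ : 0 ≤ x₀)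
    (ha : 2 * x₀ * a = x₀ ^ 2 + R ^ 2 - r ^ 2) :
    {p : ℝ × ℝ | (p.1 - x₀) ^ 2 + p.2 ^ 2 ≤ r ^ 2} ∩ {p | p.1 ^ 2 + p.2 ^ 2 ≤ R ^ 2}
      = {p | p.1 ^ 2 + p.2 ^ 2 ≤ R ^ 2 ∧ a ≤ p.1}
        ∪ {p | (p.1 - x₀) ^ 2 + p.2 ^ 2 ≤ r ^ 2 ∧ p.1 ≤ a} := by
  -- `(p.1 - x₀)² + p.2² - r² = (p.1² + p.2² - R²) - 2 x₀ (p.1 - a)`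
  ext p
  simp only [mem_inter_iff, mem_union, mem_ofPred_eq]
  constructor
  · rintro ⟨hr, hR⟩
    exact (le_total a p.1).imp (⟨hR, ·⟩) (⟨hr, ·⟩)
  · rintro (⟨hR, hp⟩ | ⟨hr, hp⟩)
    · exact ⟨by nlinarith, hR⟩
    · exact ⟨hr, by nlinarith⟩

theorem volume_disc_inter_disc {x₀ a r R : ℝ} (hx₀ : 0 ≤ x₀)
    (ha : 2 * x₀ * a = x₀ ^ 2 + R ^ 2 - r ^ 2) :
    volume ({p : ℝ × ℝ | (p.1 - x₀) ^ 2 + p.2 ^ 2 ≤ r ^ 2} ∩ {p | p.1 ^ 2 + p.2 ^ 2 ≤ R ^ 2})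
      = volume {p : ℝ × ℝ | p.1 ^ 2 + p.2 ^ 2 ≤ R ^ 2 ∧ a ≤ p.1}
        + volume {p : ℝ × ℝ | p.1 ^ 2 + p.2 ^ 2 ≤ r ^ 2 ∧ x₀ - a ≤ p.1} := by
  have hdisj : AEDisjoint volume {p : ℝ × ℝ | p.1 ^ 2 + p.2 ^ 2 ≤ R ^ 2 ∧ a ≤ p.1}
      {p | (p.1 - x₀) ^ 2 + p.2 ^ 2 ≤ r ^ 2 ∧ p.1 ≤ a} :=
    measure_mono_null (fun p ⟨⟨_, h₁⟩, _, h₂⟩ => le_antisymm h₂ h₁) (volume_setOf_fst_eq a)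
  have hmeas : MeasurableSet {p : ℝ × ℝ | p.1 ^ 2 + p.2 ^ 2 ≤ r ^ 2 ∧ x₀ - a ≤ p.1} := by
    measurability
  have hreflect : MeasurePreserving (fun p : ℝ × ℝ => (x₀ - p.1, p.2)) :=
    (Measure.measurePreserving_sub_left volume x₀).prod (MeasurePreserving.id volume)
  rw [disc_inter_disc_eq_union hx₀ ha, measure_union₀ (by measurability) hdisj,
    ← hreflect.measure_preimage hmeas.nullMeasurableSet]
  congr 2
  ext p
  simp only [mem_preimage, mem_ofPred_eq, sub_le_sub_iff_left]
  rw [show (x₀ - p.1) ^ 2 = (p.1 - x₀) ^ 2 by ring]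

theorem volume_closedBall_inter_closedBall_zero_eq {E : Type*} [NormedAddCommGroup E]
    [InnerProductSpace ℝ E] [FiniteDimensional ℝ E] [MeasurableSpace E] [BorelSpace E]
    {P Q : E} (h : ‖P‖ = ‖Q‖) (r R : ℝ) :
    volume (closedBall P r ∩ closedBall 0 R) = volume (closedBall Q r ∩ closedBall 0 R) := by
  set T := (ℝ ∙ (P - Q))ᗮ.reflection
  calc volume (closedBall P r ∩ closedBall 0 R)
      = volume (T ⁻¹' (closedBall (T P) r ∩ closedBall (T 0) R)) := by
        rw [preimage_inter, T.isometry.preimage_closedBall, T.isometry.preimage_closedBall]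
    _ = volume (closedBall (T P) r ∩ closedBall (T 0) R) :=
        T.measurePreserving.measure_preimage
          (measurableSet_closedBall.inter measurableSet_closedBall).nullMeasurableSet
    _ = volume (closedBall Q r ∩ closedBall 0 R) := by
        rw [Submodule.reflection_sub h, map_zero]

theorem measurePreserving_toLp_prod :
    MeasurePreserving (fun p : ℝ × ℝ => !₂[p.1, p.2]) :=
  (PiLp.volume_preserving_toLp (Fin 2)).comp (volume_preserving_finTwoArrow ℝ).symm

theorem mem_closedBall_finTwo_iff {x y c d ρ : ℝ} (hρ : 0 ≤ ρ) :
    !₂[x, y] ∈ closedBall !₂[c, d] ρ ↔ (x - c) ^ 2 + (y - d) ^ 2 ≤ ρ ^ 2 := by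
  rw [mem_closedBall, EuclideanSpace.dist_eq, sqrt_le_left hρ]
  simp [Fin.sum_univ_two, Real.dist_eq, sq_abs]

theorem volume_closedBall_inter_closedBall_zero_eq_prod {c r R : ℝ} (hr : 0 ≤ r) (hR : 0 ≤ R) :
    volume (closedBall !₂[c, 0] r ∩ closedBall (0 : EuclideanSpace ℝ (Fin 2)) R)
      = volume ({p : ℝ × ℝ | (p.1 - c) ^ 2 + p.2 ^ 2 ≤ r ^ 2}
          ∩ {p | p.1 ^ 2 + p.2 ^ 2 ≤ R ^ 2}) := by
  rw [← measurePreserving_toLp_prod.measure_preimage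
    (measurableSet_closedBall.inter measurableSet_closedBall).nullMeasurableSet]
  congr 1
  ext p
  have h0 : (0 : EuclideanSpace ℝ (Fin 2)) = !₂[0, 0] := by ext i; fin_cases i <;> rfl
  simp only [mem_preimage, mem_inter_iff, h0, mem_closedBall_finTwo_iff hr,
    mem_closedBall_finTwo_iff hR, sub_zero, mem_ofPred_eq]

theorem cos_arccos_sq_add_sq_sub_sq_div {a b c : ℝ} (ha : 0 < a) (hb : 0 < b)
    (h₁ : |a - b| ≤ c) (h₂ : c ≤ a + b) :
    cos (arccos ((a ^ 2 + b ^ 2 - c ^ 2) / (2 * a * b)))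
      = (a ^ 2 + b ^ 2 - c ^ 2) / (2 * a * b) := by
  obtain ⟨h₁l, h₁r⟩ := abs_le.mp h₁
  have hab : 0 < 2 * a * b := by positivity
  apply cos_arccos
  · rw [le_div_iff₀ hab]; nlinarith
  · rw [div_le_one hab]; nlinarith

/-- lens area of the intersection of two overlapping discs. -/
theorem area_disc_intersection
    (r rTN x0 : ℝ) (hr : 0 < r) (hrTN : 0 < rTN) (hx0 : 0 < x0)
    (h1 : |rTN - x0| < r) (h2 : r < rTN + x0)
    (P : EuclideanSpace ℝ (Fin 2)) (hP : ‖P‖ = x0)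
    (θ φ : ℝ)
    (hθ : θ = Real.arccos ((r ^ 2 + x0 ^ 2 - rTN ^ 2) / (2 * x0 * r)))
    (hφ : φ = Real.arccos ((-(r ^ 2) + x0 ^ 2 + rTN ^ 2) / (2 * x0 * rTN))) :
    volume (Metric.closedBall P r ∩ Metric.closedBall 0 rTN)
      = ENNReal.ofReal
          (r ^ 2 * (θ - Real.sin (2 * θ) / 2) + rTN ^ 2 * (φ - Real.sin (2 * φ) / 2)) := by
  obtain ⟨h1l, h1r⟩ := abs_lt.mp h1
  have hθcos : r * cos θ = (r ^ 2 + x0 ^ 2 - rTN ^ 2) / (2 * x0) := by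
    rw [hθ, show (r ^ 2 + x0 ^ 2 - rTN ^ 2) / (2 * x0 * r)
        = (r ^ 2 + x0 ^ 2 - rTN ^ 2) / (2 * r * x0) by ring,
      cos_arccos_sq_add_sq_sub_sq_div hr hx0 (abs_le.2 ⟨by linarith, by linarith⟩) (by linarith)]
    field_simp
  have hφcos : rTN * cos φ = (rTN ^ 2 + x0 ^ 2 - r ^ 2) / (2 * x0) := by
    rw [hφ, show (-(r ^ 2) + x0 ^ 2 + rTN ^ 2) / (2 * x0 * rTN)
        = (rTN ^ 2 + x0 ^ 2 - r ^ 2) / (2 * rTN * x0) by ring,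
      cos_arccos_sq_add_sq_sub_sq_div hrTN hx0 h1.le h2.le]
    field_simp
  have hradical : 2 * x0 * (rTN * cos φ) = x0 ^ 2 + rTN ^ 2 - r ^ 2 := by
    rw [hφcos]; field_simp; ring
  have hcentres : x0 - rTN * cos φ = r * cos θ := by
    rw [hφcos, hθcos]; field_simp; ring
  have hPQ : ‖P‖ = ‖!₂[x0, (0 : ℝ)]‖ := by simp [EuclideanSpace.norm_eq, hP, sqrt_sq hx0.le]
  have hθ₀ : 0 ≤ θ := hθ ▸ arccos_nonneg _
  have hφ₀ : 0 ≤ φ := hφ ▸ arccos_nonneg _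
  rw [volume_closedBall_inter_closedBall_zero_eq hPQ,
    volume_closedBall_inter_closedBall_zero_eq_prod hr.le hrTN.le,
    volume_disc_inter_disc hx0.le hradical, hcentres,
    volume_circularSegment hrTN.le hφ₀ (hφ ▸ arccos_le_pi _),
    volume_circularSegment hr.le hθ₀ (hθ ▸ arccos_le_pi _),
    ← ENNReal.ofReal_add (sq_mul_sub_sin_two_mul_div_two_nonneg _ hφ₀)
      (sq_mul_sub_sin_two_mul_div_two_nonneg _ hθ₀), add_comm]
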